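/- arXiv:2208.11156 — 2 statements merged into one kernel-verified Lean document; each statement's English description precedes it below -/
import Mathlib

section
/- Let P be a finite poset, K a ring, f a K-labeling with Rf ≠ ⊥, and v ∈ P. Then f(v) is invertible in K. -/
open scoped Classical


instance {α : Type*} [Fintype α] : Fintype (WithTop α) :=
  inferInstanceAs (Fintype (Option α))

instance {α : Type*} [Fintype α] : Fintype (WithBot α) :=
  inferInstanceAs (Fintype (Option α))

/-- The poset `P` with an adjoined global minimum `⊥` (called `0` in the paper) and an
adjoined global maximum `⊤` (called `1` in the paper). -/
abbrev PHat (P : Type*) := WithBot (WithTop P)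

/-- The embedding of `P` into `PHat P`. -/
def toPHat {P : Type*} (v : P) : PHat P := ((v : WithTop P) : WithBot (WithTop P))

/-- The birational toggle `T_v` at an element `v ∈ P`, as a partial map (modelled via
`Option`) on `K`-labelings `f : PHat P → K`.  It replaces the label at `v` by
`(∑_{u ⋖ v} f u) * (f v)⁻¹ * (∑_{u ⋗ v} (f u)⁻¹)⁻¹` and leaves all other labels unchanged;
it is undefined (`none`) whenever any of the required inverses fails to exist. -/
noncomputable def toggle {P : Type*} [PartialOrder P] [Fintype P] {K : Type*} [Ring K]
    (v : P) (f : PHat P → K) : Option (PHat P → K) :=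
  if IsUnit (f (toPHat v)) ∧ (∀ u : PHat P, toPHat v ⋖ u → IsUnit (f u)) ∧
      IsUnit (∑ u ∈ Finset.univ.filter (fun u : PHat P => toPHat v ⋖ u), Ring.inverse (f u))
  then some (Function.update f (toPHat v)
      ((∑ u ∈ Finset.univ.filter (fun u : PHat P => u ⋖ toPHat v), f u) *
        Ring.inverse (f (toPHat v)) *
        Ring.inverse
          (∑ u ∈ Finset.univ.filter (fun u : PHat P => toPHat v ⋖ u), Ring.inverse (f u))))
  else none

/-- `toggleList [v₁, …, vₘ] = T_{v₁} ∘ T_{v₂} ∘ ⋯ ∘ T_{vₘ}` as a partial map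
(`T_{vₘ}` is applied first); `⊥ = none` propagates through the composition. -/
noncomputable def toggleList {P : Type*} [PartialOrder P] [Fintype P] {K : Type*} [Ring K] :
    List P → (PHat P → K) → Option (PHat P → K)
  | [], f => some f
  | v :: L, f => (toggleList L f).bind (toggle v)

/-- `rowIter L n` is the `n`-fold iteration `R^n` of birational rowmotion
`R = toggleList L` (for `L` a linear extension of `P`), as a partial map. -/
noncomputable def rowIter {P : Type*} [PartialOrder P] [Fintype P] {K : Type*} [Ring K]
    (L : List P) : ℕ → (PHat P → K) → Option (PHat P → K)
  | 0, f => some f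
  | n + 1, f => (toggleList L f).bind (rowIter L n)

/-- A linear extension of a poset `P`: a list of all elements of `P`, each occurring exactly
once, such that `vᵢ < vⱼ` in `P` implies `i < j`. -/
def IsLinearExtension {P : Type*} [PartialOrder P] (L : List P) : Prop :=
  L.Nodup ∧ (∀ v : P, v ∈ L) ∧ L.Pairwise fun a b => ¬ b < a

/-!
A toggle `T_u` with `u ≠ v` leaves the label at `v` untouched, so the first toggle `T_v`
applied during `R` sees the original label `f v`; and `T_v` is defined only where that label
is a unit.
-/

theorem toPHat_injective {P : Type*} : Function.Injective (toPHat (P := P)) :=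
  WithBot.coe_injective.comp WithTop.coe_injective

section Toggle

variable {P : Type*} [PartialOrder P] [Fintype P] {K : Type*} [Ring K]

theorem isUnit_of_toggle_eq_some {u : P} {f g : PHat P → K} (h : toggle u f = some g) :
    IsUnit (f (toPHat u)) := by
  unfold toggle at h
  split_ifs at h with hc
  exact hc.1

theorem apply_of_toggle_eq_some_of_ne {u w : P} {f g : PHat P → K}
    (h : toggle u f = some g) (hwu : w ≠ u) : g (toPHat w) = f (toPHat w) := by
  unfold toggle at h
  split_ifs at h
  cases h
  exact Function.update_of_ne (toPHat_injective.ne hwu) _ _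

theorem apply_of_toggleList_eq_some_of_notMem {L : List P} {f g : PHat P → K}
    (h : toggleList L f = some g) {v : P} (hv : v ∉ L) : g (toPHat v) = f (toPHat v) := by
  induction L generalizing g with
  | nil =>
    cases h
    rfl
  | cons u L ih =>
    obtain ⟨g', hL, hu⟩ := Option.bind_eq_some_iff.mp h
    rw [List.mem_cons, not_or] at hv
    rw [apply_of_toggle_eq_some_of_ne hu hv.1, ih hL hv.2]

theorem isUnit_of_toggleList_eq_some {L : List P} {f g : PHat P → K}
    (h : toggleList L f = some g) {v : P} (hv : v ∈ L) : IsUnit (f (toPHat v)) := by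
  induction L generalizing g with
  | nil => cases hv
  | cons u L ih =>
    obtain ⟨g', hL, hu⟩ := Option.bind_eq_some_iff.mp h
    by_cases hvL : v ∈ L
    · exact ih hL hvL
    · obtain rfl : v = u := List.mem_cons.mp hv |>.resolve_right hvL
      rw [← apply_of_toggleList_eq_some_of_notMem hL hvL]
      exact isUnit_of_toggle_eq_some hu

end Toggle

/-- If `R f ≠ ⊥` and `v ∈ P`, then `f(v)` is invertible in `K`. -/
theorem stmt12 {P : Type*} [PartialOrder P] [Fintype P] {K : Type*} [Ring K]
    (L : List P) (hL : IsLinearExtension L) (f g : PHat P → K)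
    (hfg : toggleList L f = some g) (v : P) :
    IsUnit (f (toPHat v)) :=
  isUnit_of_toggleList_eq_some hfg (hL.2.1 v)
end

section
/- Let P be any finite poset, K a ring, and f a K-labeling with Rf ≠ ⊥. Set a = f(0), b = f(1). Assume (Rf)(u) is invertible for every u ∈ P̂ with u ⋗ 0. Then b · (Σ_{u ⋗ 0 in P̂} (Rf)(u)⁻¹) · a = Σ_{u ⋖ 1 in P̂} f(u). -/
open scoped Classical


/-! For `v ∈ P`, the toggle at `v` says `(Rf)(v) · (∑_{u ⋗ v} (Rf)(u)⁻¹) · f(v) = ∑_{u ⋖ v} f(u)`,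
since the labels above `v` are already toggled when `v` is and those below are not yet.
Every label of `Rf` other than `(Rf)(0)` is invertible: it sits at an upper cover of `0` or of
some `v ∈ P`, and toggling `v` required it. So multiplying the identity on the left by
`b · (Rf)(v)⁻¹` shows that the weights `w(x, y) = b · (Rf)(y)⁻¹ · f(x)` on the covering pairs
`x ⋖ y` of `P̂` form a flow conserved at every `v ∈ P`. Hence the flow out of `0` equals the flow
into `1`; these are the two sides of the identity, because `(Rf)(1) = f(1) = b`. -/

section Flow

variable {α M : Type*} [Fintype α] [AddCommGroup M]

theorem Finset.sum_out_eq_sum_in_of_conserved (r : α → α → Prop) (w : α → α → M) {s t : α}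
    (hst : s ≠ t) (hs : ∀ x, ¬ r x s) (ht : ∀ y, ¬ r t y)
    (hcons : ∀ v, v ≠ s → v ≠ t →
      ∑ y ∈ univ.filter (r v), w v y = ∑ x ∈ univ.filter (r · v), w x v) :
    ∑ y ∈ univ.filter (r s), w s y = ∑ x ∈ univ.filter (r · t), w x t := by
  have htotal :
      ∑ v, ((∑ y ∈ univ.filter (r v), w v y) - ∑ x ∈ univ.filter (r · v), w x v) = 0 := by
    rw [sum_sub_distrib, sub_eq_zero]
    simp only [sum_filter]
    exact sum_comm
  have hin_s : ∑ x ∈ univ.filter (r · s), w x s = 0 := by simp [hs]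
  have hout_t : ∑ y ∈ univ.filter (r t), w t y = 0 := by simp [ht]
  rwa [Fintype.sum_eq_add s t hst fun v hv => sub_eq_zero.mpr (hcons v hv.1 hv.2),
    hin_s, hout_t, sub_zero, zero_sub, ← sub_eq_add_neg, sub_eq_zero] at htotal

end Flow

section PHat

variable {P : Type*}

theorem toPHat_ne_top (v : P) : toPHat v ≠ (⊤ : PHat P) := by
  simp [toPHat]

theorem PHat.exists_toPHat_eq {x : PHat P} (hbot : x ≠ ⊥) (htop : x ≠ ⊤) :
    ∃ v : P, toPHat v = x := by
  induction x using WithBot.recBotCoe with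
  | bot => exact absurd rfl hbot
  | coe y =>
    induction y using WithTop.recTopCoe with
    | top => exact absurd rfl htop
    | coe v => exact ⟨v, rfl⟩

theorem toPHat_le_toPHat [Preorder P] {v w : P} : toPHat v ≤ toPHat w ↔ v ≤ w := by
  simp [toPHat]

end PHat

theorem IsLinearExtension.pairwise_not_le {P : Type*} [PartialOrder P] {L : List P}
    (hL : IsLinearExtension L) :
    L.Pairwise fun a b => ¬ b ≤ a :=
  (hL.1.and hL.2.2).imp fun hab hle => hab.2 (lt_of_le_of_ne hle (Ne.symm hab.1))

section Toggle

variable {P : Type*} [PartialOrder P] [Fintype P] {K : Type*} [Ring K]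

theorem toggle_eq_some {v : P} {h h' : PHat P → K} (H : toggle v h = some h') :
    IsUnit (h (toPHat v)) ∧ (∀ u, toPHat v ⋖ u → IsUnit (h u)) ∧
      IsUnit (∑ u ∈ Finset.univ.filter (toPHat v ⋖ ·), Ring.inverse (h u)) ∧
      h' = Function.update h (toPHat v)
        ((∑ u ∈ Finset.univ.filter (· ⋖ toPHat v), h u) * Ring.inverse (h (toPHat v)) *
          Ring.inverse (∑ u ∈ Finset.univ.filter (toPHat v ⋖ ·), Ring.inverse (h u))) := by
  unfold toggle at H
  split_ifs at H with hc
  exact ⟨hc.1, hc.2.1, hc.2.2, (Option.some_injective _ H).symm⟩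

theorem toggle_apply_of_ne {v : P} {h h' : PHat P → K} (H : toggle v h = some h')
    {x : PHat P} (hx : x ≠ toPHat v) : h' x = h x := by
  rw [(toggle_eq_some H).2.2.2, Function.update_of_ne hx]

theorem toggle_mul_sum_inverse_mul {v : P} {h h' : PHat P → K} (H : toggle v h = some h') :
    (∀ u, toPHat v ⋖ u → IsUnit (h' u)) ∧
      h' (toPHat v) * (∑ u ∈ Finset.univ.filter (toPHat v ⋖ ·), Ring.inverse (h' u)) *
          h (toPHat v) =
        ∑ u ∈ Finset.univ.filter (· ⋖ toPHat v), h u := by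
  obtain ⟨hv, hup, hS, hh'⟩ := toggle_eq_some H
  have habove : ∀ u, toPHat v ⋖ u → h' u = h u := fun u hu => toggle_apply_of_ne H hu.lt.ne'
  have hsum : ∑ u ∈ Finset.univ.filter (toPHat v ⋖ ·), Ring.inverse (h' u) =
      ∑ u ∈ Finset.univ.filter (toPHat v ⋖ ·), Ring.inverse (h u) :=
    Finset.sum_congr rfl fun u hu => by rw [habove u (Finset.mem_filter.mp hu).2]
  refine ⟨fun u hu => habove u hu ▸ hup u hu, ?_⟩
  rw [hsum, hh', Function.update_self, Ring.inverse_mul_cancel_right _ _ hS,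
    Ring.inverse_mul_cancel_right _ _ hv]

theorem toggleList_append (A B : List P) (f : PHat P → K) :
    toggleList (A ++ B) f = (toggleList B f).bind (toggleList A) := by
  induction A with
  | nil => simp [toggleList]
  | cons a A ih => simp only [List.cons_append, toggleList, ih, Option.bind_assoc]

theorem toggleList_apply_of_forall_ne {L : List P} {f g : PHat P → K}
    (H : toggleList L f = some g) {x : PHat P} (hx : ∀ v ∈ L, toPHat v ≠ x) : g x = f x := by
  induction L generalizing g with
  | nil => simp_all [toggleList]
  | cons v L ih =>
    obtain ⟨h, hh, hv⟩ := Option.bind_eq_some_iff.mp H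
    rw [toggle_apply_of_ne hv (hx v List.mem_cons_self).symm]
    exact ih hh fun w hw => hx w (List.mem_cons_of_mem _ hw)

theorem IsLinearExtension.exists_toggle_eq_some {L : List P} (hL : IsLinearExtension L)
    {f g : PHat P → K} (hfg : toggleList L f = some g) (v : P) :
    ∃ h h', toggle v h = some h' ∧ (∀ x ≤ toPHat v, h x = f x) ∧
      (∀ y, toPHat v ≤ y → h' y = g y) := by
  obtain ⟨A, B, rfl⟩ := List.append_of_mem (hL.2.1 v)
  obtain ⟨-, hvB, hAv⟩ := List.pairwise_append.mp hL.pairwise_not_le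
  rw [toggleList_append] at hfg
  obtain ⟨h', hh', hA⟩ := Option.bind_eq_some_iff.mp hfg
  obtain ⟨h, hB, hv⟩ := Option.bind_eq_some_iff.mp hh'
  refine ⟨h, h', hv, fun x hx => toggleList_apply_of_forall_ne hB ?_,
    fun y hy => (toggleList_apply_of_forall_ne hA ?_).symm⟩
  · rintro w hw rfl
    exact (List.pairwise_cons.mp hvB).1 w hw (toPHat_le_toPHat.mp hx)
  · rintro w hw rfl
    exact hAv w hw v List.mem_cons_self (toPHat_le_toPHat.mp hy)

theorem IsLinearExtension.toggleList_mul_sum_inverse_mul {L : List P}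
    (hL : IsLinearExtension L) {f g : PHat P → K} (hfg : toggleList L f = some g) (v : P) :
    (∀ u, toPHat v ⋖ u → IsUnit (g u)) ∧
      g (toPHat v) * (∑ u ∈ Finset.univ.filter (toPHat v ⋖ ·), Ring.inverse (g u)) *
          f (toPHat v) =
        ∑ u ∈ Finset.univ.filter (· ⋖ toPHat v), f u := by
  obtain ⟨h, h', hv, hbelow, habove⟩ := hL.exists_toggle_eq_some hfg v
  obtain ⟨hunit, hmul⟩ := toggle_mul_sum_inverse_mul hv
  have hsum : ∑ u ∈ Finset.univ.filter (toPHat v ⋖ ·), Ring.inverse (g u) =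
      ∑ u ∈ Finset.univ.filter (toPHat v ⋖ ·), Ring.inverse (h' u) :=
    Finset.sum_congr rfl fun u hu => by rw [habove u (Finset.mem_filter.mp hu).2.le]
  have hcov : ∑ u ∈ Finset.univ.filter (· ⋖ toPHat v), f u =
      ∑ u ∈ Finset.univ.filter (· ⋖ toPHat v), h u :=
    Finset.sum_congr rfl fun u hu => (hbelow u (Finset.mem_filter.mp hu).2.le).symm
  refine ⟨fun u hu => habove u hu.le ▸ hunit u hu, ?_⟩
  rwa [hsum, hcov, ← habove _ le_rfl, ← hbelow _ le_rfl]

theorem IsLinearExtension.isUnit_toggleList_apply {L : List P} (hL : IsLinearExtension L)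
    {f g : PHat P → K} (hfg : toggleList L f = some g)
    (hinv : ∀ u : PHat P, (⊥ : PHat P) ⋖ u → IsUnit (g u)) {u : PHat P} (hu : u ≠ ⊥) :
    IsUnit (g u) := by
  obtain ⟨x, hxu⟩ := exists_covBy_of_wellFoundedGT (not_isMin_iff_ne_bot.mpr hu)
  by_cases hx : x = ⊥
  · exact hinv u (hx ▸ hxu)
  · obtain ⟨v, rfl⟩ := PHat.exists_toPHat_eq hx (ne_top_of_lt hxu.lt)
    exact (hL.toggleList_mul_sum_inverse_mul hfg v).1 u hxu

theorem IsLinearExtension.sum_inverse_toggleList_mul {L : List P} (hL : IsLinearExtension L)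
    {f g : PHat P → K} (hfg : toggleList L f = some g) {v : P} (hv : IsUnit (g (toPHat v))) :
    (∑ u ∈ Finset.univ.filter (toPHat v ⋖ ·), Ring.inverse (g u)) * f (toPHat v) =
      Ring.inverse (g (toPHat v)) * ∑ u ∈ Finset.univ.filter (· ⋖ toPHat v), f u := by
  rw [← (hL.toggleList_mul_sum_inverse_mul hfg v).2, mul_assoc,
    Ring.inverse_mul_cancel_left _ _ hv]

end Toggle

/-- For any finite poset `P` and any `K`-labeling `f` with `R f ≠ ⊥`,
assuming `(R f)(u)` is invertible for all `u ⋗ 0`, one has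
`b · (∑_{u ⋗ 0} ((R f) u)⁻¹) · a = ∑_{u ⋖ 1} f u`, where `a = f(0)`, `b = f(1)`. -/
theorem stmt18 {P : Type*} [PartialOrder P] [Fintype P] {K : Type*} [Ring K]
    (L : List P) (hL : IsLinearExtension L) (f g : PHat P → K)
    (hfg : toggleList L f = some g)
    (hinv : ∀ u : PHat P, (⊥ : PHat P) ⋖ u → IsUnit (g u)) :
    f ⊤ * (∑ u ∈ Finset.univ.filter (fun u : PHat P => (⊥ : PHat P) ⋖ u),
        Ring.inverse (g u)) * f ⊥ =
      ∑ u ∈ Finset.univ.filter (fun u : PHat P => u ⋖ (⊤ : PHat P)), f u := by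
  have hunit : ∀ u ≠ ⊥, IsUnit (g u) := fun u hu => hL.isUnit_toggleList_apply hfg hinv hu
  have htop : g ⊤ = f ⊤ := toggleList_apply_of_forall_ne hfg fun v _ => toPHat_ne_top v
  have hflow := Finset.sum_out_eq_sum_in_of_conserved (· ⋖ ·)
    (fun x y => f ⊤ * Ring.inverse (g y) * f x) bot_ne_top (fun _ => not_covBy_bot)
    (fun _ h => not_top_lt h.lt) fun x hx_bot hx_top => by
      obtain ⟨v, rfl⟩ := PHat.exists_toPHat_eq hx_bot hx_top
      rw [← Finset.sum_mul, ← Finset.mul_sum, mul_assoc,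
        hL.sum_inverse_toggleList_mul hfg (hunit _ hx_bot), ← mul_assoc, Finset.mul_sum]
  calc f ⊤ * (∑ u ∈ Finset.univ.filter (fun u : PHat P => (⊥ : PHat P) ⋖ u),
        Ring.inverse (g u)) * f ⊥
      = ∑ u ∈ Finset.univ.filter (⊥ ⋖ ·), f ⊤ * Ring.inverse (g u) * f ⊥ := by
        rw [Finset.mul_sum, Finset.sum_mul]
    _ = ∑ u ∈ Finset.univ.filter (· ⋖ ⊤), f ⊤ * Ring.inverse (g ⊤) * f u := hflow
    _ = ∑ u ∈ Finset.univ.filter (fun u : PHat P => u ⋖ (⊤ : PHat P)), f u := by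
        rw [htop, Ring.mul_inverse_cancel _ (htop ▸ hunit ⊤ top_ne_bot)]
        simp only [one_mul]
end
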